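/- Let k ≥ 1 and let s = Σ_{j=1}^{N} f_j be a sum of continuous maps f_j: Δ^k → X whose image in the quotient complex S̄_k(X) = S_k(X)/S'_k(X) is a cycle. Then there exist a subset D ⊆ C × C of the index set C = {(j,p) : 1 ≤ j ≤ N, 0 ≤ p ≤ k} disjoint from the diagonal, and a map τ: D → Sym({0,...,k−1}), such that: (i) D is symmetric; (ii) each projection D → C is a bijection; (iii) for all ((j₁,p₁),(j₂,p₂)) ∈ D one has τ_{(j₂,p₂),(j₁,p₁)} = τ_{(j₁,p₁),(j₂,p₂)}^{-1}, f_{j₂} ∘ ι_{k,p₂} = f_{j₁} ∘ ι_{k,p₁} ∘ τ_{(j₁,p₁),(j₂,p₂)}, and sign(τ_{(j₁,p₁),(j₂,p₂)}) = −(−1)^{p₁+p₂}. -/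

import Mathlib

open scoped BigOperators
noncomputable section

/-- The standard `k`-simplex, in barycentric coordinates. -/
abbrev Δ (k : ℕ) : Type := ↥(stdSimplex ℝ (Fin (k+1)))

/-- The `p`-th face inclusion `Δ^k → Δ^{k+1}`. -/
def faceMap (k : ℕ) (p : Fin (k+2)) : C(Δ k, Δ (k+1)) where
  toFun x := ⟨fun j => ∑ i, if p.succAbove i = j then x.1 i else 0, by
    constructor
    · intro j
      refine Finset.sum_nonneg fun i _ => ?_
      by_cases h : p.succAbove i = j
      · simpa [h] using x.2.1 i
      · simp [h]
    · rw [Finset.sum_comm]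
      have h1 : ∀ i : Fin (k+1), (∑ j, if p.succAbove i = j then x.1 i else 0) = x.1 i := by
        intro i; simp
      simp_rw [h1]
      exact x.2.2⟩
  continuous_toFun := by
    apply Continuous.subtype_mk
    refine continuous_pi fun j => ?_
    refine continuous_finset_sum _ fun i _ => ?_
    by_cases h : p.succAbove i = j
    · simp only [if_pos h]
      exact (continuous_apply i).comp continuous_subtype_val
    · simpa [h] using continuous_const

/-- The affine action of a permutation of the vertices on the standard simplex. -/
def permMap (k : ℕ) (τ : Equiv.Perm (Fin (k+1))) : C(Δ k, Δ k) where
  toFun x := ⟨fun j => x.1 (τ⁻¹ j), by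
    refine ⟨fun j => x.2.1 _, ?_⟩
    rw [Equiv.sum_comp τ⁻¹ x.1]
    exact x.2.2⟩
  continuous_toFun := by
    apply Continuous.subtype_mk
    exact continuous_pi fun j => (continuous_apply _).comp continuous_subtype_val

/-- Singular `k`-chains with integer coefficients. -/
abbrev chain (X : Type) [TopologicalSpace X] (k : ℕ) : Type := FreeAbelianGroup C(Δ k, X)

/-- The singular boundary operator. -/
def bdry (X : Type) [TopologicalSpace X] (k : ℕ) : chain X (k+1) →+ chain X k :=
  ∑ p : Fin (k+2),
    ((-1 : ℤ)^(p : ℕ)) • FreeAbelianGroup.map (fun f : C(Δ (k+1), X) => f.comp (faceMap k p))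

/-- Cycles (in degree `0` every chain is a cycle). -/
def IsCycle (X : Type) [TopologicalSpace X] : ∀ k : ℕ, chain X k → Prop
  | 0, _ => True
  | (k+1), x => bdry X k x = 0

/-- The subgroup `S'_*(X)` generated by `f - sign τ • (f ∘ τ)`. -/
def Sprime (X : Type) [TopologicalSpace X] (k : ℕ) : AddSubgroup (chain X k) :=
  AddSubgroup.closure
    { x | ∃ (f : C(Δ k, X)) (τ : Equiv.Perm (Fin (k+1))),
        x = FreeAbelianGroup.of f
          - (Equiv.Perm.sign τ : ℤ) • FreeAbelianGroup.of (f.comp (permMap k τ)) }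

/-- Pushforward of chains along a continuous map. -/
def chainMap {X Y : Type} [TopologicalSpace X] [TopologicalSpace Y] (g : C(X, Y)) (k : ℕ) :
    chain X k →+ chain Y k :=
  FreeAbelianGroup.map fun f : C(Δ k, X) => g.comp f

end

/-!
Record each face `(j, p)` of the chain as an oriented simplex: the map `f j ∘ ι_p` with
orientation `(-1)^p`, up to reparametrization by vertex permutations `σ`, which multiply the
orientation by `sign σ`. A function `w` on oriented simplices with `w (-q) = -w q` induces a
homomorphism on chains that kills `S'`, and on the boundary of the chain it evaluates to the
sum of `w` over the oriented faces; so the cycle condition says that all these sums vanish.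
Testing with `w = δ_q - δ_{-q}` (in `ℤ`), or with `δ_q` (in `ℤ/2`) when `q = -q`, gives every
face a distinct partner whose oriented simplex is the negative of its own, and removing such
pairs one at a time yields a fixed-point-free involution of the faces. Two faces with opposite
oriented simplices are identified by a permutation `τ` with `sign τ = -(-1)^(p₁+p₂)`;
choosing `τ` for one face of each pair and `τ⁻¹` for the other gives `τ_{c'c} = τ_{cc'}⁻¹`.
-/

open Equiv

section Orientation

variable {X : Type} [TopologicalSpace X] {k : ℕ}

theorem permMap_one : permMap k 1 = ContinuousMap.id (Δ k) := by
  ext x j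
  rfl

theorem permMap_mul (σ τ : Perm (Fin (k+1))) :
    permMap k (σ * τ) = (permMap k σ).comp (permMap k τ) := by
  ext x j
  rfl

theorem comp_permMap_comp_permMap_inv (g : C(Δ k, X)) (σ : Perm (Fin (k+1))) :
    (g.comp (permMap k σ)).comp (permMap k σ⁻¹) = g := by
  rw [ContinuousMap.comp_assoc, ← permMap_mul, mul_inv_cancel, permMap_one, ContinuousMap.comp_id]

/-- Reparametrizing a simplex by `σ` multiplies its orientation by `sign σ`. -/
def orientationSetoid (X : Type) [TopologicalSpace X] (k : ℕ) : Setoid (C(Δ k, X) × ℤˣ) where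
  r a b := ∃ σ : Perm (Fin (k+1)), b.1 = a.1.comp (permMap k σ) ∧ b.2 = a.2 * Perm.sign σ
  iseqv := {
    refl := fun a => ⟨1, by simp [permMap_one]⟩
    symm := by
      rintro a b ⟨σ, h₁, h₂⟩
      refine ⟨σ⁻¹, ?_, ?_⟩
      · rw [h₁, comp_permMap_comp_permMap_inv]
      · rw [h₂, map_inv, mul_inv_cancel_right]
    trans := by
      rintro a b c ⟨σ, h₁, h₂⟩ ⟨τ, h₃, h₄⟩
      exact ⟨σ * τ, by rw [h₃, h₁, ContinuousMap.comp_assoc, permMap_mul],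
        by rw [h₄, h₂, map_mul, mul_assoc]⟩ }

/-- `S̄_k(X)` is the free abelian group on oriented simplices modulo `q + (-q) = 0`. -/
def OrientedSimplex (X : Type) [TopologicalSpace X] (k : ℕ) : Type :=
  Quotient (orientationSetoid X k)

namespace OrientedSimplex

def mk (g : C(Δ k, X)) (s : ℤˣ) : OrientedSimplex X k :=
  Quotient.mk (orientationSetoid X k) (g, s)

instance : InvolutiveNeg (OrientedSimplex X k) where
  neg := Quotient.map (fun a => (a.1, -a.2)) <| by
    rintro a b ⟨σ, h₁, h₂⟩
    exact ⟨σ, h₁, by simp [h₂]⟩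
  neg_neg := Quotient.ind fun a => congrArg (Quotient.mk _) (by simp)

theorem neg_mk (g : C(Δ k, X)) (s : ℤˣ) : -mk g s = mk g (-s) := rfl

theorem mk_comp_permMap (g : C(Δ k, X)) (τ : Perm (Fin (k+1))) (s : ℤˣ) :
    mk (g.comp (permMap k τ)) s = mk g (s * Perm.sign τ) :=
  (Quotient.sound (show (orientationSetoid X k).r (g, s * Perm.sign τ) (g.comp (permMap k τ), s)
    from ⟨τ, rfl, by rw [mul_assoc, Int.units_mul_self, mul_one]⟩)).symm

theorem exists_perm_of_mk_eq_neg {g h : C(Δ k, X)} {s t : ℤˣ} (e : mk h t = -mk g s) :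
    ∃ τ : Perm (Fin (k+1)), h = g.comp (permMap k τ) ∧ t = -s * Perm.sign τ :=
  Quotient.exact e.symm

variable {A : Type} [AddCommGroup A] {w : OrientedSimplex X k → A}

theorem apply_mk_of_odd (hw : ∀ q, w (-q) = -w q) (g : C(Δ k, X)) (u : ℤˣ) :
    w (mk g u) = (u : ℤ) • w (mk g 1) := by
  rcases Int.units_eq_one_or u with rfl | rfl
  · simp
  · rw [← neg_mk, hw]
    simp

theorem Sprime_le_ker_lift (hw : ∀ q, w (-q) = -w q) :
    Sprime X k ≤ (FreeAbelianGroup.lift fun g => w (mk g 1)).ker := by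
  rw [Sprime, AddSubgroup.closure_le]
  rintro _ ⟨g, τ, rfl⟩
  simp only [SetLike.mem_coe, AddMonoidHom.mem_ker, map_sub, map_zsmul,
    FreeAbelianGroup.lift_apply_of, mk_comp_permMap, one_mul]
  rw [apply_mk_of_odd hw g (Perm.sign τ), smul_smul, ← Units.val_mul, Int.units_mul_self,
    Units.val_one, one_smul, sub_self]

end OrientedSimplex

end Orientation

section FaceSums

variable {X : Type} [TopologicalSpace X] {k N : ℕ}

theorem lift_bdry_sum_of {A : Type} [AddCommGroup A] (e : C(Δ k, X) → A)
    (f : Fin N → C(Δ (k+1), X)) :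
    FreeAbelianGroup.lift e (bdry X k (∑ j, FreeAbelianGroup.of (f j)))
      = ∑ j, ∑ p : Fin (k+2), ((-1 : ℤ) ^ (p : ℕ)) • e ((f j).comp (faceMap k p)) := by
  simp only [bdry, AddMonoidHom.finsetSum_apply, map_sum, AddMonoidHom.smul_apply,
    map_zsmul, FreeAbelianGroup.map_of_apply, FreeAbelianGroup.lift_apply_of]

/-- The `p`-th face of `f j`, oriented by its sign `(-1)^p` in the boundary of `f j`. -/
def orientedFace (f : Fin N → C(Δ (k+1), X)) (c : Fin N × Fin (k+2)) : OrientedSimplex X k :=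
  OrientedSimplex.mk ((f c.1).comp (faceMap k c.2)) ((-1) ^ (c.2 : ℕ))

theorem sum_orientedFace_eq_zero {f : Fin N → C(Δ (k+1), X)}
    (hcycle : bdry X k (∑ j, FreeAbelianGroup.of (f j)) ∈ Sprime X k)
    {A : Type} [AddCommGroup A] {w : OrientedSimplex X k → A} (hw : ∀ q, w (-q) = -w q) :
    ∑ c, w (orientedFace f c) = 0 := by
  have h := OrientedSimplex.Sprime_le_ker_lift hw hcycle
  rw [AddMonoidHom.mem_ker, lift_bdry_sum_of] at h
  rw [Fintype.sum_prod_type, ← h]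
  refine Finset.sum_congr rfl fun j _ => Finset.sum_congr rfl fun p _ => ?_
  rw [orientedFace, OrientedSimplex.apply_mk_of_odd hw]
  push_cast
  rfl

/-- `τ` identifies the face `c` with the face `c'`, with opposite orientations. -/
def FacesMatch (f : Fin N → C(Δ (k+1), X)) (c c' : Fin N × Fin (k+2))
    (τ : Perm (Fin (k+1))) : Prop :=
  (f c'.1).comp (faceMap k c'.2) = ((f c.1).comp (faceMap k c.2)).comp (permMap k τ) ∧
    (Perm.sign τ : ℤ) = -(-1) ^ ((c.2 : ℕ) + c'.2)

theorem FacesMatch.inv {f : Fin N → C(Δ (k+1), X)} {c c' : Fin N × Fin (k+2)}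
    {τ : Perm (Fin (k+1))} (h : FacesMatch f c c' τ) : FacesMatch f c' c τ⁻¹ :=
  ⟨by rw [h.1, comp_permMap_comp_permMap_inv],
    by rw [map_inv, Int.units_inv_eq_self, h.2, add_comm]⟩

theorem exists_facesMatch_of_orientedFace_eq_neg {f : Fin N → C(Δ (k+1), X)}
    {c c' : Fin N × Fin (k+2)} (h : orientedFace f c' = -orientedFace f c) :
    ∃ τ, FacesMatch f c c' τ := by
  obtain ⟨τ, hface, hsign⟩ := OrientedSimplex.exists_perm_of_mk_eq_neg h
  refine ⟨τ, hface, ?_⟩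
  have : Perm.sign τ = -(-1) ^ ((c.2 : ℕ) + c'.2) := by
    rw [pow_add, hsign, neg_mul, mul_neg, neg_neg, ← mul_assoc, ← pow_add, ← two_mul, pow_mul,
      Int.units_sq, one_pow, one_mul]
  rw [this]
  push_cast
  rfl

end FaceSums

section Matching

variable {α Q : Type*} [InvolutiveNeg Q]

/-- Over the free abelian group on `Q` modulo `q + (-q) = 0`, the labels `o c` of `s` sum to
zero. -/
def Finset.NegBalanced (s : Finset α) (o : α → Q) : Prop :=
  ∀ (A : Type) [AddCommGroup A] (w : Q → A), (∀ q, w (-q) = -w q) → ∑ c ∈ s, w (o c) = 0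

namespace Finset.NegBalanced

variable [DecidableEq α] {s : Finset α} {o : α → Q}

theorem exists_ne_eq_neg (h : s.NegBalanced o) {c : α} (hc : c ∈ s) :
    ∃ c' ∈ s, c' ≠ c ∧ o c' = -o c := by
  classical
  by_contra! hnone
  by_cases hq : -o c = o c
  · have hw := h (ZMod 2) (fun q => if q = o c then 1 else 0) fun q => by
      simp only [neg_eq_iff_eq_neg, hq, ZModModule.neg_eq_self]
    rw [← Finset.add_sum_erase s _ hc, Finset.sum_eq_zero fun x hx => ?_] at hw
    · simp at hw
    · rw [if_neg]
      exact fun hx' => hnone x (mem_of_mem_erase hx) (ne_of_mem_erase hx) (hx'.trans hq.symm)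
  · have hw := h ℤ (fun q => if q = o c then 1 else if q = -o c then -1 else 0) fun q => by
      simp only [neg_eq_iff_eq_neg, neg_neg]
      by_cases h₁ : q = o c
      · simp [h₁, Ne.symm hq]
      · split_ifs <;> simp_all
    rw [← Finset.add_sum_erase s _ hc, if_pos rfl] at hw
    have : 0 ≤ ∑ x ∈ s.erase c,
        (if o x = o c then (1 : ℤ) else if o x = -o c then -1 else 0) :=
      Finset.sum_nonneg fun x hx => by
        have := hnone x (mem_of_mem_erase hx) (ne_of_mem_erase hx)
        split_ifs <;> simp_all
    omega

theorem erase_pair (h : s.NegBalanced o) {c c' : α} (hc : c ∈ s) (hc' : c' ∈ s.erase c)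
    (ho : o c' = -o c) : ((s.erase c).erase c').NegBalanced o := by
  intro A _ w hw
  have hs := h A w hw
  rwa [← Finset.add_sum_erase _ _ hc, ← Finset.add_sum_erase _ _ hc', ho, hw,
    add_neg_cancel_left] at hs

theorem exists_involution (h : s.NegBalanced o) :
    ∃ i : α → α, ∀ c ∈ s, i c ∈ s ∧ i c ≠ c ∧ i (i c) = c ∧ o (i c) = -o c := by
  induction s using Finset.strongInduction with
  | H s ih =>
  rcases s.eq_empty_or_nonempty with rfl | ⟨c, hc⟩
  · exact ⟨id, by simp⟩
  obtain ⟨c', hc's, hc'c, ho⟩ := h.exists_ne_eq_neg hc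
  have hc' : c' ∈ s.erase c := mem_erase.2 ⟨hc'c, hc's⟩
  set t := (s.erase c).erase c'
  have hts : t ⊂ s := (erase_ssubset hc').trans (erase_ssubset hc)
  obtain ⟨i, hi⟩ := ih t hts (h.erase_pair hc hc' ho)
  refine ⟨fun x => if x ∈ t then i x else Equiv.swap c c' x, fun x hx => ?_⟩
  by_cases hxt : x ∈ t
  · obtain ⟨h₁, h₂, h₃, h₄⟩ := hi x hxt
    simp [hxt, h₁, h₂, h₃, h₄, hts.subset h₁]
  · have : x = c ∨ x = c' := by
      by_contra! hne
      exact hxt (mem_erase.2 ⟨hne.2, mem_erase.2 ⟨hne.1, hx⟩⟩)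
    rcases this with rfl | rfl
    · simp [t, hc'c, hc's, ho]
    · simp [t, hc'c, hc'c.symm, hc's, ho, hc]

end Finset.NegBalanced

end Matching

theorem Function.Involutive.exists_witness_inv {α G : Type*} [Group G] {i : α → α}
    (hi : Function.Involutive i) (hne : ∀ a, i a ≠ a) {P : α → α → G → Prop}
    (hP : ∀ a b g, P a b g → P b a g⁻¹) (h : ∀ a, ∃ g, P a (i a) g) :
    ∃ t : α → G, ∀ a, P a (i a) (t a) ∧ t (i a) = (t a)⁻¹ := by
  classical
  choose g hg using h
  let r : α → α → Prop := WellOrderingRel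
  refine ⟨fun a => if r a (i a) then g a else (g (i a))⁻¹, fun a => ?_⟩
  by_cases hr : r a (i a)
  · have hr' : ¬ r (i a) a := asymm hr
    simp only [hr, hr', hi a, if_true, if_false, and_true]
    exact hg a
  · have hr' : r (i a) a :=
      ((trichotomous_of r a (i a)).resolve_left hr).resolve_left (hne a).symm
    simp only [hr, hr', hi a, if_true, if_false]
    exact ⟨by simpa [hi a] using hP _ _ _ (hg (i a)), (inv_inv _).symm⟩

/-- The dimension `k ≥ 1` of the informal statement is `k+1` here: faces are indexed by
`Fin (k+2)` and the face-identifying permutations lie in `Perm (Fin (k+1))`. -/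
theorem cycle_face_pairing_general (X : Type) [TopologicalSpace X] (k N : ℕ)
    (f : Fin N → C(Δ (k+1), X))
    (hcycle : bdry X k (∑ j, FreeAbelianGroup.of (f j)) ∈ Sprime X k) :
    ∃ (D : Set ((Fin N × Fin (k+2)) × (Fin N × Fin (k+2))))
      (τ : (Fin N × Fin (k+2)) → (Fin N × Fin (k+2)) → Equiv.Perm (Fin (k+1))),
      -- disjoint from the diagonal
      (∀ c, (c, c) ∉ D) ∧
      -- symmetric
      (∀ c c', (c, c') ∈ D → (c', c) ∈ D) ∧
      -- the projection on either coordinate is a bijection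
      (∀ c, ∃! c', (c, c') ∈ D) ∧ (∀ c', ∃! c, (c, c') ∈ D) ∧
      -- the face-matching conditions
      (∀ j₁ p₁ j₂ p₂, ((j₁, p₁), (j₂, p₂)) ∈ D →
        τ (j₂, p₂) (j₁, p₁) = (τ (j₁, p₁) (j₂, p₂))⁻¹ ∧
        (f j₂).comp (faceMap k p₂) =
          ((f j₁).comp (faceMap k p₁)).comp (permMap k (τ (j₁, p₁) (j₂, p₂))) ∧
        (Equiv.Perm.sign (τ (j₁, p₁) (j₂, p₂)) : ℤ) = -(-1 : ℤ)^((p₁ : ℕ) + (p₂ : ℕ))) := by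
  obtain ⟨i, hi⟩ := Finset.NegBalanced.exists_involution (s := .univ) (o := orientedFace f)
    fun _ _ _ hw => sum_orientedFace_eq_zero hcycle hw
  have hinv : Function.Involutive i := fun c => (hi c (Finset.mem_univ c)).2.2.1
  obtain ⟨t, ht⟩ := hinv.exists_witness_inv (P := FacesMatch f)
    (fun c => (hi c (Finset.mem_univ c)).2.1) (fun _ _ _ => FacesMatch.inv)
    (fun c => exists_facesMatch_of_orientedFace_eq_neg (hi c (Finset.mem_univ c)).2.2.2)
  refine ⟨{q | q.2 = i q.1}, fun c _ => t c, fun c hc => (hi c (Finset.mem_univ c)).2.1 hc.symm,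
    fun c c' (hc : c' = i c) => (hc ▸ hinv c).symm, fun c => ⟨i c, rfl, fun _ h => h⟩,
    fun c' => ⟨i c', (hinv c').symm, fun c (hc : c' = i c) => hc ▸ (hinv c).symm⟩, ?_⟩
  rintro j₁ p₁ j₂ p₂ (hD : (j₂, p₂) = i (j₁, p₁))
  obtain ⟨⟨hface, hsign⟩, ht_inv⟩ := hD ▸ ht (j₁, p₁)
  exact ⟨ht_inv, hface, hsign⟩

/-- (Here the pseudocycle dimension `k ≥ 1` of the statement is
written as `k+1`, so the simplices are `(k+1)`-dimensional, faces are indexed by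
`Fin (k+2)` and face-identifying permutations lie in `Sym({0,…,k}) = Perm (Fin (k+1))`.)
If `s = f_1 + ⋯ + f_N` is a sum of singular `(k+1)`-simplices whose image in the
quotient complex `S̄_{k+1}(X) = S_{k+1}(X)/S'_{k+1}(X)` is a cycle, then there are a
symmetric subset `D` of pairs of indices `(j,p)` disjoint from the diagonal, whose
projections to the index set are bijections, and permutations `τ` attached to the
elements of `D`, matching the codimension-one faces in pairs with the stated
compatibility of maps and signs. -/
theorem cycle_face_pairing (X : Type) [TopologicalSpace X] (k N : ℕ) (hN : 1 ≤ N)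
    (f : Fin N → C(Δ (k+1), X))
    (hcycle : bdry X k (∑ j, FreeAbelianGroup.of (f j)) ∈ Sprime X k) :
    ∃ (D : Set ((Fin N × Fin (k+2)) × (Fin N × Fin (k+2))))
      (τ : (Fin N × Fin (k+2)) → (Fin N × Fin (k+2)) → Equiv.Perm (Fin (k+1))),
      -- disjoint from the diagonal
      (∀ c, (c, c) ∉ D) ∧
      -- symmetric
      (∀ c c', (c, c') ∈ D → (c', c) ∈ D) ∧
      -- the projection on either coordinate is a bijection
      (∀ c, ∃! c', (c, c') ∈ D) ∧ (∀ c', ∃! c, (c, c') ∈ D) ∧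
      -- the face-matching conditions
      (∀ j₁ p₁ j₂ p₂, ((j₁, p₁), (j₂, p₂)) ∈ D →
        τ (j₂, p₂) (j₁, p₁) = (τ (j₁, p₁) (j₂, p₂))⁻¹ ∧
        (f j₂).comp (faceMap k p₂) =
          ((f j₁).comp (faceMap k p₁)).comp (permMap k (τ (j₁, p₁) (j₂, p₂))) ∧
        (Equiv.Perm.sign (τ (j₁, p₁) (j₂, p₂)) : ℤ) = -(-1 : ℤ)^((p₁ : ℕ) + (p₂ : ℕ))) :=
  cycle_face_pairing_general X k N f hcycle
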